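/- arXiv:1903.10099 — 5 statements merged into one kernel-verified Lean document; each statement's English description precedes it below -/
import Mathlib

section
/- Let m ≤ n, σ ∈ ℝ, B an (m-1)×(n-1) real matrix, G an m×(m-1) real matrix with GᵀG = I_{m-1}, and H an n×(n-1) real matrix with HᵀH = I_{n-1}. Then the determinant of the (m+n)×(m+n) block matrix [[σ I_m, -G B Hᵀ], [-H Bᵀ Gᵀ, σ I_n]] equals σ^{n-m} · σ² · det(σ² I_{m-1} − B Bᵀ). -/
open Matrix

theorem stmt_1 {m n : ℕ} (hm : 2 ≤ m) (hmn : m ≤ n) (σ : ℝ) (hσ : σ ≠ 0)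
    (B : Matrix (Fin (m - 1)) (Fin (n - 1)) ℝ)
    (G : Matrix (Fin m) (Fin (m - 1)) ℝ) (hG : Gᵀ * G = 1)
    (H : Matrix (Fin n) (Fin (n - 1)) ℝ) (hH : Hᵀ * H = 1) :
    (Matrix.fromBlocks (σ • (1 : Matrix (Fin m) (Fin m) ℝ)) (-(G * B * Hᵀ))
        (-(H * Bᵀ * Gᵀ)) (σ • (1 : Matrix (Fin n) (Fin n) ℝ))).det
      = σ ^ (n - m) * σ ^ 2 *
        (σ ^ 2 • (1 : Matrix (Fin (m - 1)) (Fin (m - 1)) ℝ) - B * Bᵀ).det := by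
  have hA : Invertible (σ • (1 : Matrix (Fin m) (Fin m) ℝ)) :=
    ⟨σ⁻¹ • 1, by rw [Matrix.smul_mul, Matrix.mul_smul, Matrix.mul_one, smul_smul, inv_mul_cancel₀ hσ, one_smul], by rw [Matrix.smul_mul, Matrix.mul_smul, Matrix.mul_one, smul_smul, mul_inv_cancel₀ hσ, one_smul]⟩
  have hinv : (⅟(σ • (1 : Matrix (Fin m) (Fin m) ℝ))) = σ⁻¹ • (1 : Matrix (Fin m) (Fin m) ℝ) :=
    invOf_eq_right_inv (by rw [Matrix.smul_mul, Matrix.mul_smul, Matrix.mul_one, smul_smul, mul_inv_cancel₀ hσ, one_smul])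
  rw [Matrix.det_fromBlocks₁₁, hinv]
  have key : Gᵀ * (G * (B * Hᵀ)) = B * Hᵀ := by rw [← Matrix.mul_assoc, hG, Matrix.one_mul]
  have hprod : (-(H * Bᵀ * Gᵀ)) * (σ⁻¹ • (1 : Matrix (Fin m) (Fin m) ℝ)) * (-(G * B * Hᵀ))
      = σ⁻¹ • (H * (Bᵀ * (B * Hᵀ))) := by
    simp only [Matrix.neg_mul, Matrix.mul_neg, neg_neg, Matrix.mul_smul, Matrix.mul_one,
      Matrix.smul_mul, Matrix.mul_assoc, key, smul_neg]
  rw [hprod]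
  set c : ℝ := -(σ⁻¹ * σ⁻¹) with hc
  have h1 : σ • (1 : Matrix (Fin n) (Fin n) ℝ) - σ⁻¹ • (H * (Bᵀ * (B * Hᵀ)))
      = σ • ((1 : Matrix (Fin n) (Fin n) ℝ) + H * (c • (Bᵀ * (B * Hᵀ)))) := by
    rw [smul_add, Matrix.mul_smul, smul_smul]
    have : σ * c = -σ⁻¹ := by rw [hc]; field_simp
    rw [this, neg_smul, ← sub_eq_add_neg]
  rw [h1, det_smul, det_smul, det_one_add_mul_comm]
  have h2 : (1 : Matrix (Fin (n-1)) (Fin (n-1)) ℝ) + c • (Bᵀ * (B * Hᵀ)) * H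
      = 1 + (c • Bᵀ) * B := by
    rw [Matrix.smul_mul, Matrix.mul_assoc, Matrix.mul_assoc, hH, Matrix.mul_one,
      Matrix.smul_mul]
  rw [h2, det_one_add_mul_comm]
  have h3 : (1 : Matrix (Fin (m-1)) (Fin (m-1)) ℝ) + B * (c • Bᵀ)
      = (σ⁻¹ * σ⁻¹) • ((σ ^ 2) • (1 : Matrix (Fin (m - 1)) (Fin (m - 1)) ℝ) - B * Bᵀ) := by
    rw [smul_sub, smul_smul]
    have : σ⁻¹ * σ⁻¹ * σ ^ 2 = 1 := by field_simp
    rw [this, one_smul, sub_eq_add_neg, Matrix.mul_smul, hc, neg_smul]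
  rw [h3, det_smul, det_one, mul_one]
  simp only [Fintype.card_fin, mul_one]
  have hpow : σ ^ m * (σ ^ n * ((σ⁻¹ * σ⁻¹) ^ (m - 1) * (σ ^ 2 • (1 : Matrix (Fin (m-1)) (Fin (m-1)) ℝ) - B * Bᵀ).det))
      = σ ^ (n - m) * σ ^ 2 * (σ ^ 2 • (1 : Matrix (Fin (m-1)) (Fin (m-1)) ℝ) - B * Bᵀ).det := by
    have e1 : (σ⁻¹ * σ⁻¹) ^ (m - 1) = (σ ^ (2 * (m - 1)))⁻¹ := by
      rw [← mul_inv, inv_pow, ← pow_two, ← pow_mul]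
    rw [e1]
    have e3 : σ ^ (m + n) * (σ ^ (2 * (m - 1)))⁻¹ = σ ^ (n - m + 2) := by
      rw [← pow_sub₀ σ hσ (by omega : 2 * (m - 1) ≤ m + n)]
      congr 1
      omega
    calc σ ^ m * (σ ^ n * ((σ ^ (2 * (m - 1)))⁻¹ * (σ ^ 2 • (1 : Matrix (Fin (m-1)) (Fin (m-1)) ℝ) - B * Bᵀ).det))
        = (σ ^ (m + n) * (σ ^ (2 * (m - 1)))⁻¹) * (σ ^ 2 • (1 : Matrix (Fin (m-1)) (Fin (m-1)) ℝ) - B * Bᵀ).det := by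
          rw [pow_add]; ring
      _ = σ ^ (n - m + 2) * (σ ^ 2 • (1 : Matrix (Fin (m-1)) (Fin (m-1)) ℝ) - B * Bᵀ).det := by rw [e3]
      _ = σ ^ (n - m) * σ ^ 2 * (σ ^ 2 • (1 : Matrix (Fin (m-1)) (Fin (m-1)) ℝ) - B * Bᵀ).det := by
          rw [pow_add]
  exact hpow
end

section
/- The Jacobian determinant of the map (σ, b, θ, φ) ↦ A = σ g(θ) h(φ)ᵀ + b G(θ) H(φ)ᵀ from ℝ⁴ to ℝ^{2×2} ≅ ℝ⁴ equals b² − σ²; equivalently, dA = (b² − σ²) dσ db dθ dφ. -/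
open Matrix Real

/-- The matrix `A = σ g(θ) h(φ)ᵀ + b G(θ) H(φ)ᵀ` of the 2×2 parametrization. -/
noncomputable def paramA (σ b θ φ : ℝ) : Matrix (Fin 2) (Fin 2) ℝ :=
  σ • vecMulVec ![Real.cos θ, Real.sin θ] ![Real.cos φ, Real.sin φ]
    + b • vecMulVec ![-Real.sin θ, Real.cos θ] ![-Real.sin φ, Real.cos φ]

/-- The components of `A`, viewed as a map `ℝ⁴ → ℝ⁴`
in the order `(A₁₁, A₁₂, A₂₁, A₂₂)`. -/
noncomputable def paramComp (i : Fin 4) (σ b θ φ : ℝ) : ℝ :=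
  paramA σ b θ φ (![0, 0, 1, 1] i) (![0, 1, 0, 1] i)

/-- The 4×4 Jacobian matrix of partial derivatives of `(σ, b, θ, φ) ↦ A`
with respect to `(σ, b, θ, φ)`. -/
noncomputable def paramJacobian (σ b θ φ : ℝ) : Matrix (Fin 4) (Fin 4) ℝ :=
  Matrix.of fun i j =>
    ![deriv (fun s => paramComp i s b θ φ) σ,
      deriv (fun t => paramComp i σ t θ φ) b,
      deriv (fun u => paramComp i σ b u φ) θ,
      deriv (fun v => paramComp i σ b θ v) φ] j

/-- Derivative of a linear function. -/
lemma deriv_lin' (c d x : ℝ) : deriv (fun s : ℝ => s * c + d) x = c := by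
  have h : HasDerivAt (fun s : ℝ => s * c + d) c x := by
    simpa using ((hasDerivAt_id x).mul_const c).add_const d
  exact h.deriv

/-- Derivative of a trigonometric combination. -/
lemma deriv_trig' (a c x : ℝ) :
    deriv (fun u : ℝ => a * Real.cos u + c * Real.sin u) x
      = c * Real.cos x - a * Real.sin x := by
  have h : HasDerivAt (fun u : ℝ => a * Real.cos u + c * Real.sin u)
      (a * (-Real.sin x) + c * Real.cos x) x :=
    ((Real.hasDerivAt_cos x).const_mul a).add ((Real.hasDerivAt_sin x).const_mul c)
  rw [h.deriv]; ring

lemma paramComp_eq (i : Fin 4) (s t u v : ℝ) :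
    paramComp i s t u v =
      ![s * (Real.cos u * Real.cos v) + t * (Real.sin u * Real.sin v),
        s * (Real.cos u * Real.sin v) - t * (Real.sin u * Real.cos v),
        s * (Real.sin u * Real.cos v) - t * (Real.cos u * Real.sin v),
        s * (Real.sin u * Real.sin v) + t * (Real.cos u * Real.cos v)] i := by
  fin_cases i <;>
    simp [paramComp, paramA, vecMulVec, Matrix.add_apply, Matrix.smul_apply] <;> ring

theorem stmt_6 (σ b θ φ : ℝ) :
    (paramJacobian σ b θ φ).det = b ^ 2 - σ ^ 2 := by
  have key : paramJacobian σ b θ φ =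
      !![Real.cos θ * Real.cos φ, Real.sin θ * Real.sin φ,
           b * Real.sin φ * Real.cos θ - σ * Real.cos φ * Real.sin θ,
           b * Real.sin θ * Real.cos φ - σ * Real.cos θ * Real.sin φ;
         Real.cos θ * Real.sin φ, -(Real.sin θ * Real.cos φ),
           -(b * Real.cos φ) * Real.cos θ - σ * Real.sin φ * Real.sin θ,
           σ * Real.cos θ * Real.cos φ - -(b * Real.sin θ) * Real.sin φ;
         Real.sin θ * Real.cos φ, -(Real.cos θ * Real.sin φ),
           σ * Real.cos φ * Real.cos θ - -(b * Real.sin φ) * Real.sin θ,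
           -(b * Real.cos θ) * Real.cos φ - σ * Real.sin θ * Real.sin φ;
         Real.sin θ * Real.sin φ, Real.cos θ * Real.cos φ,
           σ * Real.sin φ * Real.cos θ - b * Real.cos φ * Real.sin θ,
           σ * Real.sin θ * Real.cos φ - b * Real.cos θ * Real.sin φ] := by
    ext i j
    have e0 : ∀ i, (fun s => paramComp i s b θ φ) =
        (fun s => s * (![Real.cos θ * Real.cos φ, Real.cos θ * Real.sin φ,
            Real.sin θ * Real.cos φ, Real.sin θ * Real.sin φ] i) +
          b * (![Real.sin θ * Real.sin φ, -(Real.sin θ * Real.cos φ),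
            -(Real.cos θ * Real.sin φ), Real.cos θ * Real.cos φ] i)) := by
      intro i; funext s; fin_cases i <;> simp [paramComp_eq] <;> ring
    have e1 : ∀ i, (fun t => paramComp i σ t θ φ) =
        (fun t => t * (![Real.sin θ * Real.sin φ, -(Real.sin θ * Real.cos φ),
            -(Real.cos θ * Real.sin φ), Real.cos θ * Real.cos φ] i) +
          σ * (![Real.cos θ * Real.cos φ, Real.cos θ * Real.sin φ,
            Real.sin θ * Real.cos φ, Real.sin θ * Real.sin φ] i)) := by
      intro i; funext t; fin_cases i <;> simp [paramComp_eq] <;> ring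
    have e2 : ∀ i, (fun u => paramComp i σ b u φ) =
        (fun u => (![σ * Real.cos φ, σ * Real.sin φ, -(b * Real.sin φ), b * Real.cos φ] i)
            * Real.cos u +
          (![b * Real.sin φ, -(b * Real.cos φ), σ * Real.cos φ, σ * Real.sin φ] i)
            * Real.sin u) := by
      intro i; funext u; fin_cases i <;> simp [paramComp_eq] <;> ring
    have e3 : ∀ i, (fun v => paramComp i σ b θ v) =
        (fun v => (![σ * Real.cos θ, -(b * Real.sin θ), σ * Real.sin θ, b * Real.cos θ] i)
            * Real.cos v +
          (![b * Real.sin θ, σ * Real.cos θ, -(b * Real.cos θ), σ * Real.sin θ] i)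
            * Real.sin v) := by
      intro i; funext v; fin_cases i <;> simp [paramComp_eq] <;> ring
    fin_cases j
    · fin_cases i <;>
        simp only [paramJacobian, Matrix.of_apply, Matrix.cons_val_zero, e0, deriv_lin'] <;>
        norm_num [Matrix.of_apply]
    · fin_cases i <;>
        simp only [paramJacobian, Matrix.of_apply, Matrix.cons_val_one, Matrix.head_cons,
          e1, deriv_lin'] <;> norm_num [Matrix.of_apply]
    · fin_cases i <;>
        simp only [paramJacobian, Matrix.of_apply, e2, deriv_trig'] <;>
        norm_num [Matrix.of_apply]
    · fin_cases i <;>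
        simp only [paramJacobian, Matrix.of_apply, e3, deriv_trig'] <;>
        norm_num [Matrix.of_apply]
  rw [key]
  have h1 := Real.sin_sq_add_cos_sq θ
  have h2 := Real.sin_sq_add_cos_sq φ
  simp only [Matrix.det_succ_row_zero, Fin.sum_univ_succ, Fin.sum_univ_zero, Matrix.det_fin_zero, Matrix.submatrix_apply, Fin.succ_succAbove_succ, Fin.succ_succAbove_zero, Fin.zero_succAbove, Fin.succAbove_zero, Matrix.of_apply, Matrix.cons_val_succ, Matrix.cons_val_zero, Fin.val_succ, Fin.val_zero]
  linear_combination
    ((b ^ 2 - σ ^ 2) * (Real.sin φ ^ 2 + Real.cos φ ^ 2) ^ 2 *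
      (1 + Real.sin θ ^ 2 + Real.cos θ ^ 2)) * h1 +
    ((b ^ 2 - σ ^ 2) * (1 + Real.sin φ ^ 2 + Real.cos φ ^ 2)) * h2
end

section
/- Let W = AAᵀ where A is a 2×n real random matrix whose columns are i.i.d. N₂(μᵢ, Σ) rows arranged so W ~ W₂(n, Σ; Ω), and suppose Σ has two distinct eigenvalues λ₁(Σ) > λ₂(Σ) with unit eigenvectors p₁, p₂. Then for every x, Pr(λ₂(W) ≥ x) ≤ Pr(λ₂(Σ)·χ²(n; δ₂²) ≥ x) and Pr(λ₁(W) ≥ x) ≥ Pr(λ₁(Σ)·χ²(n; δ₁²) ≥ x), where δᵢ² = pᵢᵀΣΩpᵢ / λᵢ(Σ). Here λ₁(W) ≥ λ₂(W) denote the ordered eigenvalues of W. -/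
open Matrix MeasureTheory

lemma rayleigh {W : Matrix (Fin 2) (Fin 2) ℝ} (hW : W.IsHermitian) {p : Fin 2 → ℝ}
    (hp : p ⬝ᵥ p = 1) :
    min (hW.eigenvalues 0) (hW.eigenvalues 1) ≤ p ⬝ᵥ W.mulVec p ∧
    p ⬝ᵥ W.mulVec p ≤ max (hW.eigenvalues 0) (hW.eigenvalues 1) := by
  set U : Matrix (Fin 2) (Fin 2) ℝ := (hW.eigenvectorUnitary : Matrix (Fin 2) (Fin 2) ℝ) with hUdef
  have hU1 : U * star U = 1 := (Matrix.mem_unitaryGroup_iff).mp hW.eigenvectorUnitary.2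
  set q : Fin 2 → ℝ := star U *ᵥ p with hqdef
  have hUq : U *ᵥ q = p := by
    rw [hqdef, mulVec_mulVec, hU1, one_mulVec]
  have hmv : p ᵥ* U = q := by
    rw [hqdef, Matrix.star_eq_conjTranspose, conjTranspose_eq_transpose_of_trivial,
      mulVec_transpose]
  have hq : q ⬝ᵥ q = 1 := by
    calc q ⬝ᵥ q = q ⬝ᵥ (star U *ᵥ p) := rfl
    _ = (q ᵥ* star U) ⬝ᵥ p := by rw [dotProduct_mulVec]
    _ = (U *ᵥ q) ⬝ᵥ p := by rw [Matrix.star_eq_conjTranspose, conjTranspose_eq_transpose_of_trivial, vecMul_transpose]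
    _ = 1 := by rw [hUq, hp]
  have hval : p ⬝ᵥ W.mulVec p = hW.eigenvalues 0 * q 0 ^ 2 + hW.eigenvalues 1 * q 1 ^ 2 := by
    conv_lhs => rw [hW.spectral_theorem, Unitary.conjStarAlgAut_apply]
    rw [← hUdef, ← mulVec_mulVec, ← mulVec_mulVec, dotProduct_mulVec, hmv]
    change q ⬝ᵥ (_ *ᵥ q) = _
    simp [dotProduct, mulVec_diagonal, Fin.sum_univ_two]
    ring
  have hqq : q 0 ^ 2 + q 1 ^ 2 = 1 := by
    have := hq
    simp [dotProduct, Fin.sum_univ_two] at this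
    nlinarith [this]
  have h0 : hW.eigenvalues 0 * (q 0 ^ 2 + q 1 ^ 2) = hW.eigenvalues 0 := by rw [hqq, mul_one]
  have h1 : hW.eigenvalues 1 * (q 0 ^ 2 + q 1 ^ 2) = hW.eigenvalues 1 := by rw [hqq, mul_one]
  constructor
  · rw [hval]
    rcases le_total (hW.eigenvalues 0) (hW.eigenvalues 1) with h | h
    · rw [min_eq_left h]; nlinarith [mul_nonneg (sub_nonneg.2 h) (sq_nonneg (q 1)), h0, h1]
    · rw [min_eq_right h]; nlinarith [mul_nonneg (sub_nonneg.2 h) (sq_nonneg (q 0)), h0, h1]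
  · rw [hval]
    rcases le_total (hW.eigenvalues 0) (hW.eigenvalues 1) with h | h
    · rw [max_eq_right h]; nlinarith [mul_nonneg (sub_nonneg.2 h) (sq_nonneg (q 0)), h0, h1]
    · rw [max_eq_left h]; nlinarith [mul_nonneg (sub_nonneg.2 h) (sq_nonneg (q 1)), h0, h1]

theorem stmt_10 {Ω : Type*} [MeasurableSpace Ω] (μ : Measure Ω)
    [IsProbabilityMeasure μ]
    (W : Ω → Matrix (Fin 2) (Fin 2) ℝ)
    (hsym : ∀ ω, (W ω).IsHermitian)
    (lam1 lam2 : Ω → ℝ)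
    (hlam1 : ∀ ω, lam1 ω = max ((hsym ω).eigenvalues 0) ((hsym ω).eigenvalues 1))
    (hlam2 : ∀ ω, lam2 ω = min ((hsym ω).eigenvalues 0) ((hsym ω).eigenvalues 1))
    (p₁ p₂ : Fin 2 → ℝ) (hp₁ : p₁ ⬝ᵥ p₁ = 1) (hp₂ : p₂ ⬝ᵥ p₂ = 1)
    -- `T i x = Pr(λ_i(Σ)·χ²(n; δ_i²) ≥ x)`, which by the distributional fact
    -- equals the law of the Rayleigh quotient `p_iᵀ W p_i`:
    (T₁ T₂ : ℝ → ENNReal)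
    (hT₁ : ∀ x, μ {ω | x ≤ p₁ ⬝ᵥ (W ω).mulVec p₁} = T₁ x)
    (hT₂ : ∀ x, μ {ω | x ≤ p₂ ⬝ᵥ (W ω).mulVec p₂} = T₂ x) :
    ∀ x : ℝ, μ {ω | x ≤ lam2 ω} ≤ T₂ x ∧ T₁ x ≤ μ {ω | x ≤ lam1 ω} := by
  intro x
  constructor
  · rw [← hT₂ x]
    apply measure_mono
    intro ω hω
    exact le_trans (by rw [← hlam2 ω]; exact hω) (rayleigh (hsym ω) hp₂).1
  · rw [← hT₁ x]
    apply measure_mono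
    intro ω hω
    exact le_trans (le_trans hω (rayleigh (hsym ω) hp₁).2) (le_of_eq (hlam1 ω).symm)
end

section
/- Let n ≥ 1 and b > 0. As x → ∞, the tail of the non-central chi-square distribution with n degrees of freedom and non-centrality b² is exponentially heavier than the central one: Pr(χ²(n; b²) ≥ x) / Pr(χ²(n; 0) ≥ x) → ∞. -/
open Filter Real

lemma aux_rpow_exp (b a : ℝ) (hb : 0 < b) :
    Tendsto (fun x : ℝ => x ^ a * Real.exp (b * Real.sqrt x)) atTop atTop := by
  have hsq : Tendsto Real.sqrt atTop atTop := by
    apply (tendsto_rpow_atTop (by norm_num : (0:ℝ) < 1/2)).congr'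
    filter_upwards [eventually_ge_atTop 0] with x hx
    rw [← Real.sqrt_eq_rpow]
  have h1 : Tendsto (fun x : ℝ => b * Real.sqrt x) atTop atTop :=
    hsq.const_mul_atTop hb
  have h2 := (tendsto_exp_div_rpow_atTop (-(2*a))).comp h1
  have h3 : Tendsto (fun x : ℝ =>
      b ^ (-(2*a)) * (Real.exp (b * Real.sqrt x) / (b * Real.sqrt x) ^ (-(2*a))))
      atTop atTop := h2.const_mul_atTop (Real.rpow_pos_of_pos hb _)
  apply h3.congr'
  filter_upwards [eventually_gt_atTop 0] with x hx
  have hsx : 0 < Real.sqrt x := Real.sqrt_pos.mpr hx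
  have hu : 0 < b * Real.sqrt x := mul_pos hb hsx
  have key : (b * Real.sqrt x) ^ (2*a) = b ^ (2*a) * x ^ a := by
    rw [Real.mul_rpow hb.le hsx.le, Real.sqrt_eq_rpow, ← Real.rpow_mul hx.le,
      show (1/2:ℝ)*(2*a) = a by ring]
  have hb2 : (0:ℝ) < b ^ (2*a) := Real.rpow_pos_of_pos hb _
  have hxa : (0:ℝ) < x ^ a := Real.rpow_pos_of_pos hx _
  rw [Real.rpow_neg hu.le, Real.rpow_neg hb.le, key]
  field_simp

/-- Assuming the stated tail asymptotics
`Pr(χ²(n; b²) ≥ x) ≍ x^((n−3)/4) e^(−x/2 + b√x)` (for `b > 0`) and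
`Pr(χ²(n; 0) ≥ x) ≍ x^((n−2)/2) e^(−x/2)`, the non-central tail is
exponentially heavier than the central one:
`Pr(χ²(n; b²) ≥ x) / Pr(χ²(n; 0) ≥ x) → ∞` as `x → ∞`. -/
theorem stmt_12 (n : ℕ) (hn : 1 ≤ n) (b : ℝ) (hb : 0 < b)
    (F G : ℝ → ℝ)
    (hF : ∃ k l : ℝ, 0 < k ∧ 0 < l ∧ ∀ᶠ x in atTop,
      k * (x ^ (((n : ℝ) - 3) / 4) * Real.exp (-x / 2 + b * Real.sqrt x)) ≤ F x ∧
      F x ≤ l * (x ^ (((n : ℝ) - 3) / 4) * Real.exp (-x / 2 + b * Real.sqrt x)))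
    (hG : ∃ k l : ℝ, 0 < k ∧ 0 < l ∧ ∀ᶠ x in atTop,
      k * (x ^ (((n : ℝ) - 2) / 2) * Real.exp (-x / 2)) ≤ G x ∧
      G x ≤ l * (x ^ (((n : ℝ) - 2) / 2) * Real.exp (-x / 2))) :
    Tendsto (fun x => F x / G x) atTop atTop := by
  obtain ⟨k, l, hk, hl, hFe⟩ := hF
  obtain ⟨k', l', hk', hl', hGe⟩ := hG
  have hmain : Tendsto (fun x : ℝ =>
      (k / l') * (x ^ ((1 - (n:ℝ)) / 4) * Real.exp (b * Real.sqrt x))) atTop atTop :=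
    (aux_rpow_exp b _ hb).const_mul_atTop (div_pos hk hl')
  apply tendsto_atTop_mono' _ _ hmain
  filter_upwards [hFe, hGe, eventually_gt_atTop 0] with x ⟨hF1, _⟩ ⟨hG1, hG2⟩ hx
  set p := ((n:ℝ) - 3) / 4
  set q := ((n:ℝ) - 2) / 2
  have hxp : (0:ℝ) < x ^ p := Real.rpow_pos_of_pos hx _
  have hxq : (0:ℝ) < x ^ q := Real.rpow_pos_of_pos hx _
  have hA : (0:ℝ) < k * (x ^ p * Real.exp (-x / 2 + b * Real.sqrt x)) :=
    mul_pos hk (mul_pos hxp (Real.exp_pos _))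
  have hB : (0:ℝ) < l' * (x ^ q * Real.exp (-x / 2)) :=
    mul_pos hl' (mul_pos hxq (Real.exp_pos _))
  have hGpos : 0 < G x :=
    lt_of_lt_of_le (mul_pos hk' (mul_pos hxq (Real.exp_pos _))) hG1
  have step : k * (x ^ p * Real.exp (-x / 2 + b * Real.sqrt x)) /
      (l' * (x ^ q * Real.exp (-x / 2))) ≤ F x / G x :=
    div_le_div₀ (le_trans hA.le hF1) hF1 hGpos hG2
  refine le_trans (le_of_eq ?_) step
  have hpq : p - q = (1 - (n:ℝ)) / 4 := by simp [p, q]; ring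
  rw [← hpq, Real.rpow_sub hx, Real.exp_add]
  field_simp
end

section
/- Let A be an m×n real matrix (m ≤ n) with m distinct nonzero singular values σ⁽¹⁾ > ⋯ > σ⁽ᵐ⁾ > 0, and let g⁽ⁱ⁾, h⁽ⁱ⁾ be corresponding left/right unit singular vectors. Fix smooth frames G(g) ∈ ℝ^{m×(m−1)}, H(h) ∈ ℝ^{n×(n−1)} completing g, h to special orthogonal matrices. Then the map ψ(σ, g, h, B) = σ g hᵀ + G(g) B H(h)ᵀ and the map φᵢ(A) = (σ⁽ⁱ⁾, g⁽ⁱ⁾, h⁽ⁱ⁾, G(g⁽ⁱ⁾)ᵀ A H(h⁽ⁱ⁾)) satisfy φᵢ ∘ ψ = id and ψ ∘ φᵢ = id on the appropriate domains; in particular, the singular values of B = G(g⁽ⁱ⁾)ᵀ A H(h⁽ⁱ⁾) are exactly the singular values of A with σ⁽ⁱ⁾ removed. -/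
open Matrix Polynomial

section aux
variable {l p q : Type*} [Fintype p]

lemma aux_vecMulVec_mul (u : l → ℝ) (v : p → ℝ) (A : Matrix p q ℝ) :
    vecMulVec u v * A = vecMulVec u (v ᵥ* A) := by
  ext i j
  simp [vecMulVec_apply, mul_apply, vecMul, dotProduct, Finset.mul_sum, mul_assoc]

lemma aux_mul_vecMulVec (A : Matrix l p ℝ) (u : p → ℝ) (v : q → ℝ) :
    A * vecMulVec u v = vecMulVec (A *ᵥ u) v := by
  ext i j
  simp [vecMulVec_apply, mul_apply, mulVec, dotProduct, Finset.sum_mul, mul_assoc]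

lemma aux_vecMulVec_zero (u : l → ℝ) : vecMulVec u (0 : q → ℝ) = 0 := by
  ext i j; simp [vecMulVec_apply]

lemma aux_zero_vecMulVec (v : q → ℝ) : vecMulVec (0 : l → ℝ) v = 0 := by
  ext i j; simp [vecMulVec_apply]

lemma aux_vecMulVec_smul (c : ℝ) (u : l → ℝ) (v : q → ℝ) :
    vecMulVec u (c • v) = c • vecMulVec u v := by
  ext i j; simp [vecMulVec_apply]; ring

lemma aux_smul_vecMulVec (c : ℝ) (u : l → ℝ) (v : q → ℝ) :
    vecMulVec (c • u) v = c • vecMulVec u v := by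
  ext i j; simp [vecMulVec_apply]; ring

lemma aux_vecMul_vecMulVec (v w : p → ℝ) (x : q → ℝ) :
    v ᵥ* vecMulVec w x = (w ⬝ᵥ v) • x := by
  ext j
  simp only [vecMul, dotProduct, vecMulVec_apply, Pi.smul_apply, smul_eq_mul,
    Finset.sum_mul]
  exact Finset.sum_congr rfl fun i _ => by ring

lemma aux_transpose_vecMulVec (u : l → ℝ) (v : q → ℝ) :
    (vecMulVec u v)ᵀ = vecMulVec v u := by
  ext i j; simp [vecMulVec_apply, mul_comm]

lemma aux_charpoly_conj {k : Type*} [Fintype k] [DecidableEq k]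
    (Q M : Matrix k k ℝ) (hQ : Q * Qᵀ = 1) :
    (Q * M * Qᵀ).charpoly = M.charpoly := by
  have hQ' : Q.map C * (Qᵀ.map C) = 1 := by
    rw [← Matrix.map_mul, hQ]; simp
  have hcm : charmatrix (Q * M * Qᵀ) = Q.map C * charmatrix M * Qᵀ.map C := by
    simp only [charmatrix, RingHom.mapMatrix_apply]
    rw [Matrix.mul_sub, Matrix.sub_mul]
    congr 1
    · rw [← (scalar_commute (X : ℝ[X]) (fun r' => Commute.all _ _) (Q.map C)),
        Matrix.mul_assoc, hQ', Matrix.mul_one]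
    · rw [Matrix.map_mul, Matrix.map_mul]
  have hdet : (Q.map (C : ℝ →+* ℝ[X]) : Matrix k k ℝ[X]).det * (Qᵀ.map C).det = 1 := by
    rw [← det_mul, hQ', det_one]
  rw [Matrix.charpoly, hcm, det_mul, det_mul, Matrix.charpoly]
  calc (Q.map C).det * (charmatrix M).det * (Qᵀ.map C).det
      = ((Q.map C).det * (Qᵀ.map C).det) * (charmatrix M).det := by ring
    _ = (charmatrix M).det := by rw [hdet, one_mul]

end aux

/-- Key identity behind Lemma 2 (`φᵢ ∘ ψ = id`, `ψ ∘ φᵢ = id`):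
if `A h = σ g`, `Aᵀ g = σ h` with `(g | G) ∈ O(m)` and `(h | H) ∈ O(n)`, then
`A = σ g hᵀ + G (Gᵀ A H) Hᵀ`, and the singular values of `B = Gᵀ A H` are
exactly the singular values of `A` with `σ` removed, expressed through the
characteristic polynomials of `A Aᵀ` and `B Bᵀ`. -/
theorem stmt_19 {m n : ℕ} (hm : 2 ≤ m) (hmn : m ≤ n)
    (A : Matrix (Fin m) (Fin n) ℝ) (σ : ℝ) (hσ : 0 < σ)
    (g : Fin m → ℝ) (h : Fin n → ℝ)
    (G : Matrix (Fin m) (Fin (m - 1)) ℝ) (H : Matrix (Fin n) (Fin (n - 1)) ℝ)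
    (hg : g ⬝ᵥ g = 1) (hh : h ⬝ᵥ h = 1)
    (hG : Gᵀ * G = 1) (hH : Hᵀ * H = 1)
    (hGg : Gᵀ.mulVec g = 0) (hHh : Hᵀ.mulVec h = 0)
    (hGfull : vecMulVec g g + G * Gᵀ = 1)
    (hHfull : vecMulVec h h + H * Hᵀ = 1)
    (hAh : A.mulVec h = σ • g) (hAtg : Aᵀ.mulVec g = σ • h) :
    A = σ • vecMulVec g h + G * (Gᵀ * A * H) * Hᵀ ∧
      (A * Aᵀ).charpoly
        = (X - C (σ ^ 2)) * ((Gᵀ * A * H) * (Gᵀ * A * H)ᵀ).charpoly := by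
  set B : Matrix (Fin (m-1)) (Fin (n-1)) ℝ := Gᵀ * A * H with hB
  -- basic vanishing facts
  have hgA : g ᵥ* A = σ • h := by rw [← mulVec_transpose]; exact hAtg
  have hhH : h ᵥ* H = 0 := by rw [← mulVec_transpose]; exact hHh
  have hvggA : vecMulVec g g * A = σ • vecMulVec g h := by
    rw [aux_vecMulVec_mul, hgA, aux_vecMulVec_smul]
  have hvghH : vecMulVec g h * H = 0 := by
    rw [aux_vecMulVec_mul, hhH, aux_vecMulVec_zero]
  have hGtvgh : Gᵀ * vecMulVec g h = 0 := by
    rw [aux_mul_vecMulVec, hGg, aux_zero_vecMulVec]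
  have hAvhh : A * vecMulVec h h = σ • vecMulVec g h := by
    rw [aux_mul_vecMulVec, hAh, aux_smul_vecMulVec]
  -- Part 1
  have step2 : Gᵀ * A = (Gᵀ * A * H) * Hᵀ := by
    calc Gᵀ * A = Gᵀ * A * (vecMulVec h h + H * Hᵀ) := by rw [hHfull, Matrix.mul_one]
      _ = Gᵀ * (A * vecMulVec h h) + Gᵀ * A * H * Hᵀ := by
          rw [Matrix.mul_add, Matrix.mul_assoc Gᵀ A (vecMulVec h h),
            Matrix.mul_assoc (Gᵀ * A) H Hᵀ]
      _ = (Gᵀ * A * H) * Hᵀ := by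
          rw [hAvhh, Matrix.mul_smul, hGtvgh, smul_zero, zero_add]
  have part1 : A = σ • vecMulVec g h + G * B * Hᵀ := by
    calc A = (vecMulVec g g + G * Gᵀ) * A := by rw [hGfull, Matrix.one_mul]
      _ = σ • vecMulVec g h + G * (Gᵀ * A) := by
          rw [Matrix.add_mul, hvggA, Matrix.mul_assoc]
      _ = σ • vecMulVec g h + G * B * Hᵀ := by
          rw [step2, ← Matrix.mul_assoc, hB]
  -- Part 2: A Aᵀ = σ² g gᵀ + G B Bᵀ Gᵀ
  have key : A * Aᵀ = σ^2 • vecMulVec g g + G * (B * Bᵀ) * Gᵀ := by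
    have hT : (σ • vecMulVec g h + G * B * Hᵀ)ᵀ
        = σ • vecMulVec h g + H * Bᵀ * Gᵀ := by
      rw [transpose_add, transpose_smul, transpose_mul, transpose_mul, transpose_transpose,
        aux_transpose_vecMulVec, Matrix.mul_assoc]
    rw [part1, hT]
    rw [Matrix.add_mul, Matrix.mul_add, Matrix.mul_add]
    have e1 : (σ • vecMulVec g h) * (σ • vecMulVec h g) = σ^2 • vecMulVec g g := by
      rw [Matrix.smul_mul, Matrix.mul_smul, smul_smul, ← sq, aux_vecMulVec_mul,
        aux_vecMul_vecMulVec, hh, one_smul]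
    have e2 : (σ • vecMulVec g h) * (H * Bᵀ * Gᵀ) = 0 := by
      rw [Matrix.smul_mul, Matrix.mul_assoc H Bᵀ Gᵀ, ← Matrix.mul_assoc _ H _, hvghH,
        Matrix.zero_mul, smul_zero]
    have e3 : (G * B * Hᵀ) * (σ • vecMulVec h g) = 0 := by
      rw [Matrix.mul_smul, Matrix.mul_assoc (G * B) Hᵀ, aux_mul_vecMulVec, hHh,
        aux_zero_vecMulVec, Matrix.mul_zero, smul_zero]
    have e4 : (G * B * Hᵀ) * (H * Bᵀ * Gᵀ) = G * (B * Bᵀ) * Gᵀ := by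
      simp only [Matrix.mul_assoc]
      rw [← Matrix.mul_assoc Hᵀ H, hH, Matrix.one_mul]
    rw [e1, e2, e3, e4, add_zero, zero_add]
  refine ⟨part1, ?_⟩
  -- orthogonal frame P and block-diagonal form
  set P : Matrix (Fin m) (Fin 1 ⊕ Fin (m-1)) ℝ := fromCols (replicateCol (Fin 1) g) G with hP
  set M : Matrix (Fin 1 ⊕ Fin (m-1)) (Fin 1 ⊕ Fin (m-1)) ℝ :=
    fromBlocks (σ^2 • (1 : Matrix (Fin 1) (Fin 1) ℝ)) 0 0 (B * Bᵀ) with hM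
  have hPPt : P * Pᵀ = 1 := by
    rw [hP, transpose_fromCols, fromCols_mul_fromRows, transpose_replicateCol]
    convert hGfull using 2
    exact (vecMulVec_eq (Fin 1) g g).symm
  have hPMPt : P * M * Pᵀ = A * Aᵀ := by
    rw [hP, hM, transpose_fromCols, fromCols_mul_fromBlocks,
      fromCols_mul_fromRows, transpose_replicateCol]
    rw [Matrix.mul_zero, Matrix.mul_zero, add_zero, zero_add, key]
    congr 1
    rw [Matrix.mul_smul, Matrix.mul_one, Matrix.smul_mul]
    exact congrArg (σ ^ 2 • ·) (vecMulVec_eq (Fin 1) g g).symm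
  -- reindex to a square matrix over Fin m
  have hm1 : 1 + (m - 1) = m := by omega
  set e : Fin 1 ⊕ Fin (m-1) ≃ Fin m := finSumFinEquiv.trans (finCongr hm1) with he
  set Q : Matrix (Fin m) (Fin m) ℝ := P.submatrix id e.symm with hQ
  have hQQt : Q * Qᵀ = 1 := by
    rw [hQ, transpose_submatrix, submatrix_mul_equiv, hPPt]
    rfl
  have hQMQt : Q * (reindex e e M) * Qᵀ = A * Aᵀ := by
    rw [hQ, reindex_apply, transpose_submatrix, submatrix_mul_equiv, submatrix_mul_equiv]
    rw [hPMPt]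
    rfl
  have hchar : (A * Aᵀ).charpoly = M.charpoly := by
    rw [← hQMQt, aux_charpoly_conj _ _ hQQt, charpoly_reindex]
  rw [hchar, hM, charpoly_fromBlocks_zero₂₁]
  congr 1
  -- charpoly of the 1×1 block
  rw [Matrix.charpoly, Matrix.det_fin_one]
  simp [charmatrix_apply_eq]
end
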